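/- Let λ, μ ∈ ℝ and let A : h_0 × F_λ → F_μ be a nonzero sl(2)-invariant bilinear differential operator. Then μ = λ + k − 1/2 for some non-negative integer k satisfying k(k−1)(2λ+k−1)(2λ+k−2) = 0, and, up to a scalar factor, A(h,f) = h f^{(k)} + k(2λ+k−1) h' f^{(k−1)}. -/

import Mathlib

noncomputable section
open Function
open scoped ContDiff

/-- The subalgebra of smooth functions `ℝ → ℝ`. -/
def SmoothFn : Subalgebra ℝ (ℝ → ℝ) where
  carrier := {f | ContDiff ℝ ∞ f}
  mul_mem' := fun {a b} (hf : ContDiff ℝ ∞ a) (hg : ContDiff ℝ ∞ b) => hf.mul hg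
  add_mem' := fun {a b} (hf : ContDiff ℝ ∞ a) (hg : ContDiff ℝ ∞ b) => hf.add hg
  algebraMap_mem' := fun c => (contDiff_const : ContDiff ℝ ∞ (fun _ : ℝ => c))

/-- The type of smooth functions `ℝ → ℝ`, i.e. `C^∞(ℝ)`; for `λ ∈ ℝ` it also serves as
the space `F_λ` of `λ`-densities `f (dx)^λ`. -/
abbrev SF : Type := SmoothFn

theorem mem_SmoothFn {f : ℝ → ℝ} : f ∈ SmoothFn ↔ ContDiff ℝ ∞ f := ⟨fun h => h, fun h => h⟩

/-- The derivative, as an operation on smooth functions. -/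
def sderiv (f : SF) : SF :=
  ⟨deriv (f : ℝ → ℝ), mem_SmoothFn.mpr (contDiff_infty_iff_deriv.mp (mem_SmoothFn.mp f.2)).2⟩

/-- The function `x` as a smooth function. -/
def cx : SF := ⟨id, mem_SmoothFn.mpr contDiff_id⟩

/-- The Lie derivative `L^λ_{X_g}(f) = g f′ + λ f g′` of the vector field `X_g = g d/dx`
acting on `λ`-densities. -/
def Lc (lam : ℝ) (g f : SF) : SF := g * sderiv f + lam • (sderiv g * f)

/-- The generators `1, x, x²` of `sl(2) ⊂ Vect(ℝ)` (identifying `X_g ↔ g`). -/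
def sl2set : Set SF := {1, cx, cx * cx}

/-- `h₀ ⊂ F_{−1/2}`: the span of `x (dx)^{−1/2}` and `(dx)^{−1/2}`. -/
def h0sub : Submodule ℝ SF := Submodule.span ℝ {cx, 1}

/-- `h₁ ⊂ F_0`: the span of the constant function `1`. -/
def h1sub : Submodule ℝ SF := Submodule.span ℝ {1}

/-- A bilinear differential operator `h₀ × F_λ → F_μ`:
`A(h,f) = Σ_{i,j} a_{i,j} h^{(i)} f^{(j)}` with smooth coefficients. -/
def IsBilinDiffOp0 (A : h0sub → SF → SF) : Prop :=
  ∃ (N : ℕ) (a : Fin (N + 1) → Fin (N + 1) → SF),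
    ∀ (h : h0sub) (f : SF),
      A h f = ∑ i : Fin (N + 1), ∑ j : Fin (N + 1),
        a i j * (sderiv^[(i : ℕ)] h.1 * sderiv^[(j : ℕ)] f)

/-- A bilinear differential operator `h₁ × F_λ → F_μ`. -/
def IsBilinDiffOp1 (B : h1sub → SF → SF) : Prop :=
  ∃ (N : ℕ) (a : Fin (N + 1) → Fin (N + 1) → SF),
    ∀ (h : h1sub) (f : SF),
      B h f = ∑ i : Fin (N + 1), ∑ j : Fin (N + 1),
        a i j * (sderiv^[(i : ℕ)] h.1 * sderiv^[(j : ℕ)] f)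

/-!
Since `h'' = 0` for `h ∈ h₀`, a bilinear differential operator on `h₀ × F_λ` has the normal form
`A(h, f) = ∑ⱼ (pⱼ h + qⱼ h') f⁽ʲ⁾`, and its coefficients are read off by testing on `f = (x - t)ʲ`
at `x = t`. Invariance under `X_1` makes the `pⱼ, qⱼ` constants `aⱼ, bⱼ`. Testing `X_x` on `h = 1`
and `X_{x²}` on `h = 1, x`, with `f = xᵐ` at `x = 0`, gives
`aₘ (μ - λ - m + 1/2) = 0`, `bₘ = (m + 1)(m + 2λ) aₘ₊₁` and `(m + 2λ) bₘ₊₁ = 0`.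
So a single `a_k` survives, `μ = λ + k - 1/2`, `b_{k-1} = k(2λ + k - 1) a_k`, and for `k ≥ 2` the
last relation at `m = k - 2` forces `(2λ + k - 1)(2λ + k - 2) = 0`.
-/

namespace SL2

open Finset

instance : CoeFun SF (fun _ => ℝ → ℝ) := ⟨Subtype.val⟩

lemma sf_ext {f g : SF} (h : ∀ t, f t = g t) : f = g :=
  Subtype.ext (funext h)

@[simp] lemma add_apply (f g : SF) (t : ℝ) : (f + g) t = f t + g t := rfl
@[simp] lemma mul_apply (f g : SF) (t : ℝ) : (f * g) t = f t * g t := rfl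
@[simp] lemma smul_apply (c : ℝ) (f : SF) (t : ℝ) : (c • f) t = c * f t := rfl
@[simp] lemma cx_apply (t : ℝ) : cx t = t := rfl
@[simp] lemma sderiv_apply (f : SF) (t : ℝ) : sderiv f t = deriv f t := rfl

@[simp] lemma sum_apply (s : Finset ℕ) (F : ℕ → SF) (t : ℝ) :
    (∑ j ∈ s, F j) t = ∑ j ∈ s, F j t :=
  map_sum ((Pi.evalAddMonoidHom (fun _ : ℝ => ℝ) t).comp SmoothFn.val.toAddMonoidHom) F s

lemma differentiable (f : SF) : Differentiable ℝ f :=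
  (mem_SmoothFn.mp f.2).differentiable (by simp)

lemma sderiv_add (f g : SF) : sderiv (f + g) = sderiv f + sderiv g :=
  sf_ext fun t => deriv_add (differentiable f t) (differentiable g t)

lemma sderiv_smul (c : ℝ) (f : SF) : sderiv (c • f) = c • sderiv f :=
  sf_ext fun t => deriv_const_mul c (differentiable f t)

lemma sderiv_mul (f g : SF) : sderiv (f * g) = sderiv f * g + f * sderiv g :=
  sf_ext fun t => deriv_mul (differentiable f t) (differentiable g t)

lemma sderiv_sum (s : Finset ℕ) (F : ℕ → SF) : sderiv (∑ j ∈ s, F j) = ∑ j ∈ s, sderiv (F j) :=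
  map_sum (AddMonoidHom.mk' sderiv sderiv_add) F s

lemma sderiv_algebraMap (c : ℝ) : sderiv (algebraMap ℝ SF c) = 0 :=
  sf_ext fun t => deriv_const t c

@[simp] lemma sderiv_one : sderiv 1 = 0 := sderiv_algebraMap 1

@[simp] lemma sderiv_zero : sderiv 0 = 0 := sderiv_algebraMap 0

lemma iterate_sderiv_smul (c : ℝ) (f : SF) (j : ℕ) :
    sderiv^[j] (c • f) = c • sderiv^[j] f := by
  induction j with
  | zero => rfl
  | succ j ih => rw [iterate_succ_apply', iterate_succ_apply', ih, sderiv_smul]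

lemma eq_algebraMap_of_sderiv_eq_zero {f : SF} (hf : sderiv f = 0) :
    f = algebraMap ℝ SF (f 0) :=
  sf_ext fun t =>
    is_const_of_deriv_eq_zero (differentiable f) (fun t => congrFun (congrArg Subtype.val hf) t) t 0

def monomial (t : ℝ) (m : ℕ) : SF :=
  ⟨fun y => (y - t) ^ m, mem_SmoothFn.mpr ((contDiff_id.sub contDiff_const).pow m)⟩

@[simp] lemma monomial_apply (t : ℝ) (m : ℕ) (y : ℝ) : monomial t m y = (y - t) ^ m := rfl

lemma monomial_zero_right (t : ℝ) : monomial t 0 = 1 := sf_ext fun y => by simp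

lemma cx_eq_monomial : cx = monomial 0 1 := sf_ext fun y => by simp

lemma cx_mul_cx_eq_monomial : cx * cx = monomial 0 2 := sf_ext fun y => by simp [sq]

lemma sderiv_monomial (t : ℝ) (m : ℕ) : sderiv (monomial t m) = (m : ℝ) • monomial t (m - 1) :=
  sf_ext fun y => by
    simp only [sderiv_apply, smul_apply, monomial_apply]
    exact (((hasDerivAt_id y).sub_const t).pow m).deriv.trans (by simp)

lemma iterate_sderiv_monomial (t : ℝ) (m j : ℕ) :
    sderiv^[j] (monomial t m) = (m.descFactorial j : ℝ) • monomial t (m - j) := by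
  induction j with
  | zero => simp
  | succ j ih =>
    rw [iterate_succ_apply', ih, sderiv_smul, sderiv_monomial, smul_smul, Nat.descFactorial_succ,
      Nat.sub_sub, Nat.cast_mul, mul_comm]

lemma iterate_sderiv_monomial_apply_self (t : ℝ) (m j : ℕ) :
    sderiv^[j] (monomial t m) t = if j = m then (m.factorial : ℝ) else 0 := by
  rw [iterate_sderiv_monomial]
  simp only [smul_apply, monomial_apply, sub_self]
  rcases lt_trichotomy j m with hjm | rfl | hjm
  · simp [hjm.ne, Nat.sub_ne_zero_of_lt hjm]
  · simp [Nat.descFactorial_self]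
  · simp [hjm.ne', Nat.descFactorial_eq_zero_iff_lt.mpr hjm]

lemma Lc_monomial_monomial (l : ℝ) (a b : ℕ) :
    Lc l (monomial 0 a) (monomial 0 b) = ((b : ℝ) + a * l) • monomial 0 (a + b - 1) := by
  refine sf_ext fun y => ?_
  simp only [Lc, sderiv_monomial, add_apply, mul_apply, smul_apply, monomial_apply, sub_zero]
  rcases a with _ | a <;> rcases b with _ | b <;>
    simp only [Nat.cast_zero, Nat.add_sub_cancel, Nat.add_succ_sub_one, zero_add, add_zero,
      pow_succ] <;>
    push_cast <;> ring

lemma sderiv_cx : sderiv cx = 1 := sf_ext fun t => deriv_id t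

lemma one_mem_h0sub : (1 : SF) ∈ h0sub := Submodule.subset_span (by simp)

lemma cx_mem_h0sub : cx ∈ h0sub := Submodule.subset_span (by simp)

lemma sderiv_sderiv_of_mem_h0sub {h : SF} (hh : h ∈ h0sub) : sderiv (sderiv h) = 0 := by
  obtain ⟨α, β, rfl⟩ := Submodule.mem_span_pair.mp hh
  simp [sderiv_add, sderiv_smul, sderiv_cx]

lemma iterate_sderiv_of_mem_h0sub {h : SF} (hh : h ∈ h0sub) {i : ℕ} (hi : 2 ≤ i) :
    sderiv^[i] h = 0 := by
  obtain ⟨i, rfl⟩ := Nat.exists_eq_add_of_le' hi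
  rw [iterate_add_apply, iterate_succ_apply, iterate_one, sderiv_sderiv_of_mem_h0sub hh,
    iterate_fixed sderiv_zero]

lemma Lc_monomial_mem_h0sub {a b : ℕ} (ha : a ≤ 2) (hb : b ≤ 1) :
    Lc (-(1 : ℝ) / 2) (monomial 0 a) (monomial 0 b) ∈ h0sub := by
  rw [Lc_monomial_monomial]
  by_cases hab : a + b - 1 ≤ 1
  · refine Submodule.smul_mem _ _ ?_
    interval_cases h : a + b - 1
    · rw [monomial_zero_right]; exact one_mem_h0sub
    · rw [← cx_eq_monomial]; exact cx_mem_h0sub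
  · -- the coefficient `1 + 2 · (-1/2)` of `x²` vanishes
    obtain ⟨rfl, rfl⟩ : a = 2 ∧ b = 1 := by omega
    norm_num

lemma Lc_mem_h0sub {g h : SF} (hg : g ∈ sl2set) (hh : h ∈ h0sub) :
    Lc (-(1 : ℝ) / 2) g h ∈ h0sub := by
  obtain ⟨a, ha, rfl⟩ : ∃ a ≤ 2, g = monomial 0 a := by
    rcases hg with rfl | rfl | rfl
    exacts [⟨0, by norm_num, (monomial_zero_right 0).symm⟩, ⟨1, by norm_num, cx_eq_monomial⟩,
      ⟨2, le_rfl, cx_mul_cx_eq_monomial⟩]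
  let L : SF →ₗ[ℝ] SF :=
    { toFun := Lc (-(1 : ℝ) / 2) (monomial 0 a)
      map_add' := fun f₁ f₂ => by simp only [Lc, sderiv_add, mul_add]; module
      map_smul' := fun c f => by
        simp only [Lc, sderiv_smul, RingHom.id_apply, mul_smul_comm]; module }
  suffices h0sub ≤ h0sub.comap L from this hh
  refine Submodule.span_le.mpr ?_
  rintro _ (rfl | rfl)
  · rw [cx_eq_monomial]; exact Lc_monomial_mem_h0sub ha le_rfl
  · rw [← monomial_zero_right 0]; exact Lc_monomial_mem_h0sub ha zero_le_one

def normalOp (M : ℕ) (p q : ℕ → SF) (h f : SF) : SF :=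
  ∑ j ∈ range M, (p j * (h * sderiv^[j] f) + q j * (sderiv h * sderiv^[j] f))

lemma exists_normalOp {A : h0sub → SF → SF} (hA : IsBilinDiffOp0 A) :
    ∃ (M : ℕ) (p q : ℕ → SF), (∀ j, M ≤ j → p j = 0 ∧ q j = 0) ∧
      ∀ h f, A h f = normalOp M p q h f := by
  obtain ⟨N, a, ha⟩ := hA
  let a' (i j : ℕ) : SF := if hij : i < N + 1 ∧ j < N + 1 then a ⟨i, hij.1⟩ ⟨j, hij.2⟩ else 0
  have ha' : ∀ i j, N + 1 ≤ i ∨ N + 1 ≤ j → a' i j = 0 := fun i j hij =>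
    dif_neg (by omega)
  refine ⟨N + 1, a' 0, a' 1, fun j hj => ⟨ha' 0 j (.inr hj), ha' 1 j (.inr hj)⟩, fun h f => ?_⟩
  let G (i : ℕ) : SF := ∑ j ∈ range (N + 1), a' i j * (sderiv^[i] h * sderiv^[j] f)
  calc A h f = ∑ i ∈ range (N + 1), G i := by simp [ha, G, a', Finset.sum_range, Fin.is_le]
    _ = ∑ i ∈ range (N + 2), G i :=
      sum_subset (range_subset_range.mpr (by omega)) fun i _ hi =>
        sum_eq_zero fun j _ => by rw [ha' i j (.inl (by simpa using hi)), zero_mul]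
    _ = ∑ i ∈ range 2, G i :=
      (sum_subset (range_subset_range.mpr (by omega)) fun i _ hi =>
        sum_eq_zero fun j _ => by
          rw [iterate_sderiv_of_mem_h0sub h.2 (by simp at hi; omega), zero_mul, mul_zero]).symm
    _ = normalOp (N + 1) (a' 0) (a' 1) h f := by
      rw [sum_range_succ, sum_range_one, normalOp, ← sum_add_distrib]
      rfl

section normalOp
variable {M : ℕ} {p q : ℕ → SF}

lemma normalOp_smul_left (c : ℝ) (h f : SF) :
    normalOp M p q (c • h) f = c • normalOp M p q h f := by
  simp only [normalOp, smul_sum, sderiv_smul, smul_add, smul_mul_assoc, mul_smul_comm]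

lemma normalOp_smul_right (c : ℝ) (h f : SF) :
    normalOp M p q h (c • f) = c • normalOp M p q h f := by
  simp only [normalOp, smul_sum, iterate_sderiv_smul, smul_add, mul_smul_comm]

lemma sderiv_normalOp (h f : SF) :
    sderiv (normalOp M p q h f) = normalOp M (sderiv ∘ p) (sderiv ∘ q) h f
      + normalOp M p q (sderiv h) f + normalOp M p q h (sderiv f) := by
  simp only [normalOp, sderiv_sum, ← sum_add_distrib, sderiv_add, sderiv_mul, comp_apply,
    ← iterate_succ_apply' sderiv, iterate_succ_apply]
  refine sum_congr rfl fun j _ => ?_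
  ring

lemma normalOp_monomial_apply_self (hpq : ∀ j, M ≤ j → p j = 0 ∧ q j = 0) (h : SF) (t : ℝ)
    (m : ℕ) : normalOp M p q h (monomial t m) t
      = m.factorial * (p m t * h t + q m t * sderiv h t) := by
  simp only [normalOp, sum_apply, add_apply, mul_apply, iterate_sderiv_monomial_apply_self,
    mul_ite, mul_zero, ite_add_ite, add_zero]
  rw [sum_ite_eq']
  split_ifs with hm
  · ring
  · obtain ⟨hp, hq⟩ := hpq m (by simpa using hm)
    simp [hp, hq]

lemma coeff_eq_zero_of_normalOp_eq_zero (hpq : ∀ j, M ≤ j → p j = 0 ∧ q j = 0)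
    (hzero : ∀ h ∈ h0sub, ∀ f, normalOp M p q h f = 0) (j : ℕ) : p j = 0 ∧ q j = 0 := by
  have hfac : (j.factorial : ℝ) ≠ 0 := by positivity
  have hval (h : SF) (hh : h ∈ h0sub) (t : ℝ) : p j t * h t + q j t * sderiv h t = 0 := by
    have := normalOp_monomial_apply_self hpq h t j
    rw [hzero h hh] at this
    exact (mul_eq_zero.mp this.symm).resolve_left hfac
  have hp (t : ℝ) : p j t = 0 := by simpa using hval 1 one_mem_h0sub t
  refine ⟨sf_ext hp, sf_ext fun t => ?_⟩
  simpa [hp, sderiv_cx] using hval cx cx_mem_h0sub t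

lemma normalOp_eq_of_support {k : ℕ} (hk : k < M) (hp : ∀ j ≠ k, p j = 0)
    (hq : ∀ j ≠ k - 1, q j = 0) (h f : SF) :
    normalOp M p q h f = p k * (h * sderiv^[k] f) + q (k - 1) * (sderiv h * sderiv^[k - 1] f) := by
  rw [normalOp, sum_add_distrib,
    sum_eq_single_of_mem k (mem_range.mpr hk) fun j _ hj => by rw [hp j hj, zero_mul],
    sum_eq_single_of_mem (k - 1) (mem_range.mpr (by omega)) fun j _ hj => by rw [hq j hj, zero_mul]]

end normalOp

def IsInvariantUnder (lam mu : ℝ) (g : SF) (B : SF → SF → SF) : Prop :=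
  ∀ h ∈ h0sub, ∀ f, Lc mu g (B h f) = B (Lc (-(1 : ℝ) / 2) g h) f + B h (Lc lam g f)

section relations
variable {lam mu : ℝ} {M : ℕ} {p q : ℕ → SF}

lemma Lc_one (l : ℝ) (f : SF) : Lc l 1 f = sderiv f := by simp [Lc]

lemma monomial_zero_mem_h0sub : monomial 0 0 ∈ h0sub := by
  rw [monomial_zero_right]; exact one_mem_h0sub

lemma monomial_one_mem_h0sub : monomial 0 1 ∈ h0sub := by
  rw [← cx_eq_monomial]; exact cx_mem_h0sub

lemma exists_coeff_eq_algebraMap_of_isInvariantUnder_one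
    (hpq : ∀ j, M ≤ j → p j = 0 ∧ q j = 0) (hB : IsInvariantUnder lam mu 1 (normalOp M p q)) :
    ∃ a b : ℕ → ℝ, p = algebraMap ℝ SF ∘ a ∧ q = algebraMap ℝ SF ∘ b := by
  have hzero : ∀ h ∈ h0sub, ∀ f, normalOp M (sderiv ∘ p) (sderiv ∘ q) h f = 0 := by
    intro h hh f
    simpa [Lc_one, sderiv_normalOp] using hB h hh f
  have hpq' : ∀ j, M ≤ j → (sderiv ∘ p) j = 0 ∧ (sderiv ∘ q) j = 0 := fun j hj => by
    simp [(hpq j hj).1, (hpq j hj).2]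
  have hderiv := coeff_eq_zero_of_normalOp_eq_zero hpq' hzero
  exact ⟨fun j => p j 0, fun j => q j 0,
    funext fun j => eq_algebraMap_of_sderiv_eq_zero (hderiv j).1,
    funext fun j => eq_algebraMap_of_sderiv_eq_zero (hderiv j).2⟩

lemma weight_relation_of_isInvariantUnder_cx (hpq : ∀ j, M ≤ j → p j = 0 ∧ q j = 0)
    (hB : IsInvariantUnder lam mu cx (normalOp M p q)) (m : ℕ) :
    p m 0 * (mu - (lam + m - 1 / 2)) = 0 := by
  rw [cx_eq_monomial] at hB
  have E := congrFun (congrArg Subtype.val (hB _ monomial_zero_mem_h0sub (monomial 0 m))) 0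
  rw [Lc_monomial_monomial, Lc_monomial_monomial, normalOp_smul_left, normalOp_smul_right,
    show 1 + m - 1 = m by omega] at E
  change Lc mu _ _ 0 = _ at E
  simp only [Lc, add_apply, mul_apply, smul_apply, monomial_apply, sderiv_apply, sderiv_monomial,
    normalOp_monomial_apply_self hpq] at E
  have hfac : (m.factorial : ℝ) ≠ 0 := by positivity
  refine mul_left_cancel₀ hfac ?_
  linear_combination E

lemma sq_relations_of_isInvariantUnder_cx_mul_cx (hpq : ∀ j, M ≤ j → p j = 0 ∧ q j = 0)
    (hB : IsInvariantUnder lam mu (cx * cx) (normalOp M p q)) (m : ℕ) :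
    q m 0 = (m + 1) * (m + 2 * lam) * p (m + 1) 0 ∧ (m + 2 * lam) * q (m + 1) 0 = 0 := by
  rw [cx_mul_cx_eq_monomial] at hB
  have E (b : ℕ) (hb : monomial 0 b ∈ h0sub) :=
    congrFun (congrArg Subtype.val (hB _ hb (monomial 0 m))) 0
  have E₀ := E 0 monomial_zero_mem_h0sub
  have E₁ := E 1 monomial_one_mem_h0sub
  rw [Lc_monomial_monomial, Lc_monomial_monomial, normalOp_smul_left, normalOp_smul_right,
    show 2 + m - 1 = m + 1 by omega] at E₀ E₁
  change Lc mu _ _ 0 = _ at E₀ E₁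
  simp only [Lc, add_apply, mul_apply, smul_apply, monomial_apply, sderiv_apply, sderiv_monomial,
    normalOp_monomial_apply_self hpq, Nat.factorial_succ, Nat.cast_mul, Nat.cast_succ] at E₀ E₁
  have hfac : (m.factorial : ℝ) ≠ 0 := by positivity
  constructor
  · refine mul_left_cancel₀ hfac ?_
    linear_combination E₀
  · have hfac' : ((m + 1) * m.factorial : ℝ) ≠ 0 := by positivity
    refine mul_left_cancel₀ hfac' ?_
    linear_combination -E₁

end relations

section sequences
variable {lam mu : ℝ} {a b : ℕ → ℝ} {k : ℕ}

lemma mu_eq_of_weight_relation (hw : ∀ m : ℕ, a m * (mu - (lam + m - 1 / 2)) = 0) (hk : a k ≠ 0) :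
    mu = lam + k - 1 / 2 := by
  linarith [(mul_eq_zero.mp (hw k)).resolve_left hk]

lemma eq_zero_of_weight_relation (hw : ∀ m : ℕ, a m * (mu - (lam + m - 1 / 2)) = 0)
    (hk : a k ≠ 0) {j : ℕ} (hj : j ≠ k) : a j = 0 := by
  refine (mul_eq_zero.mp (hw j)).resolve_right fun h => hj ?_
  have : (j : ℝ) = k := by linarith [mu_eq_of_weight_relation hw hk]
  exact_mod_cast this

lemma eq_zero_of_sq_relation (hw : ∀ m : ℕ, a m * (mu - (lam + m - 1 / 2)) = 0)
    (hsq : ∀ m : ℕ, b m = (m + 1) * (m + 2 * lam) * a (m + 1)) (hk : a k ≠ 0) {j : ℕ}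
    (hj : j ≠ k - 1) : b j = 0 := by
  rw [hsq, eq_zero_of_weight_relation hw hk (by omega : j + 1 ≠ k), mul_zero]

lemma pred_eq_of_sq_relation (hw : ∀ m : ℕ, a m * (mu - (lam + m - 1 / 2)) = 0)
    (hsq : ∀ m : ℕ, b m = (m + 1) * (m + 2 * lam) * a (m + 1)) (hk : a k ≠ 0) :
    b (k - 1) = k * (2 * lam + k - 1) * a k := by
  rcases k with _ | k
  · simp [hsq 0, eq_zero_of_weight_relation hw hk one_ne_zero]
  · rw [Nat.add_sub_cancel, hsq]
    push_cast
    ring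

lemma quartic_eq_zero_of_sq_relations (hsq : ∀ m : ℕ, b m = (m + 1) * (m + 2 * lam) * a (m + 1))
    (hsq' : ∀ m : ℕ, (m + 2 * lam) * b (m + 1) = 0) (hk : a k ≠ 0) :
    (k : ℝ) * (k - 1) * (2 * lam + k - 1) * (2 * lam + k - 2) = 0 := by
  rcases Nat.lt_or_ge k 2 with hk2 | hk2
  · interval_cases k <;> norm_num
  obtain ⟨n, rfl⟩ := Nat.exists_eq_add_of_le' hk2
  have h : ((n + 2 * lam) * ((n + 2) * (n + 1 + 2 * lam))) * a (n + 2) = 0 := by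
    have := hsq' n
    rw [hsq (n + 1)] at this
    push_cast at this
    linear_combination this
  push_cast
  linear_combination (n + 1 : ℝ) * (mul_eq_zero.mp h).resolve_right hk

end sequences

end SL2

open SL2

/-- Classification of nonzero `sl(2)`-invariant bilinear differential operators
`A : h₀ × F_λ → F_μ`: necessarily `μ = λ + k − 1/2` with `k ∈ ℕ` satisfying
`k(k−1)(2λ+k−1)(2λ+k−2) = 0`, and up to a scalar factor
`A(h,f) = h f^{(k)} + k(2λ+k−1) h′ f^{(k−1)}`. -/
theorem sl2_invariant_operators_h0 (lam mu : ℝ) (A : h0sub → SF → SF)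
    (hdiff : IsBilinDiffOp0 A)
    (hinv : ∀ g ∈ sl2set, ∀ (h : h0sub) (hm : Lc (-(1 : ℝ) / 2) g h.1 ∈ h0sub) (f : SF),
      Lc mu g (A h f) = A ⟨Lc (-(1 : ℝ) / 2) g h.1, hm⟩ f + A h (Lc lam g f))
    (hA : A ≠ 0) :
    ∃ k : ℕ, mu = lam + k - 1 / 2 ∧
      (k : ℝ) * ((k : ℝ) - 1) * (2 * lam + k - 1) * (2 * lam + k - 2) = 0 ∧
      ∃ c : ℝ, ∀ (h : h0sub) (f : SF),
        A h f = c • (h.1 * sderiv^[k] f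
          + ((k : ℝ) * (2 * lam + (k : ℝ) - 1)) • (sderiv h.1 * sderiv^[k - 1] f)) := by
  obtain ⟨M, p, q, hpq, hAnf⟩ := exists_normalOp hdiff
  have hB : ∀ g ∈ sl2set, IsInvariantUnder lam mu g (normalOp M p q) := fun g hg h hh f => by
    simpa only [hAnf] using hinv g hg ⟨h, hh⟩ (Lc_mem_h0sub hg hh) f
  obtain ⟨a, b, rfl, rfl⟩ :=
    exists_coeff_eq_algebraMap_of_isInvariantUnder_one hpq (hB 1 (by simp [sl2set]))
  have hw : ∀ m : ℕ, a m * (mu - (lam + m - 1 / 2)) = 0 :=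
    weight_relation_of_isInvariantUnder_cx hpq (hB cx (by simp [sl2set]))
  have hsq := sq_relations_of_isInvariantUnder_cx_mul_cx hpq (hB (cx * cx) (by simp [sl2set]))
  have hb : ∀ m : ℕ, b m = (m + 1) * (m + 2 * lam) * a (m + 1) := fun m => (hsq m).1
  have hb' : ∀ m : ℕ, (m + 2 * lam) * b (m + 1) = 0 := fun m => (hsq m).2
  obtain ⟨k, hk⟩ : ∃ k, a k ≠ 0 := by
    by_contra! ha
    exact hA (funext₂ fun h f => by simp [hAnf, normalOp, ha, hb])
  have hkM : k < M := by
    by_contra! hMk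
    simpa [hk] using (hpq k hMk).1
  refine ⟨k, mu_eq_of_weight_relation hw hk, quartic_eq_zero_of_sq_relations hb hb' hk, a k,
    fun h f => ?_⟩
  rw [hAnf, normalOp_eq_of_support hkM (fun j hj => by simp [eq_zero_of_weight_relation hw hk hj])
    (fun j hj => by simp [eq_zero_of_sq_relation hw hb hk hj]), comp_apply, comp_apply,
    pred_eq_of_sq_relation hw hb hk, ← Algebra.smul_def, ← Algebra.smul_def, smul_add, smul_smul,
    mul_comm (a k)]
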